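/- Let (Λ_j)_{j∈ℕ₀} be finite index sets with #Λ_j ~ 2^{2j}, and for admissible parameters (α,p,q) define the sequence space b^α_{p,q} of all complex sequences a = (a_{j,λ}) with quasi-norm ( Σ_j 2^{j(α + 2(1/2 - 1/p))q} ( Σ_{λ∈Λ_j} |a_{j,λ}|^p )^{q/p} )^{1/q} finite. If γ < 0, then there is no continuous embedding b^{α+γ}_{p_0,q_0} ↪ b^α_{p_1,q_1}: indeed, the sequence a* with a*_{j,λ} := 2^{-j(1 + α + γ/2)} for all λ ∈ Λ_j belongs to b^{α+γ}_{p_0,q_0} but not to b^α_{p_1,q_1}. -/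

import Mathlib

open scoped ENNReal NNReal

/-- Admissibility of a parameter tuple `(α, p, q)` with finite `p, q`:
`1/2 ≤ 1/p ≤ α/2 + 1/2` and `q ≤ 2` in the limiting case `1/p = α/2 + 1/2`. -/
def AdmissibleT (α p q : ℝ) : Prop :=
  0 < p ∧ 0 < q ∧ 1 / 2 ≤ 1 / p ∧ 1 / p ≤ α / 2 + 1 / 2 ∧ (1 / p = α / 2 + 1 / 2 → q ≤ 2)

/-- The `b^α_{p,q}`-quasi-norm (to the power one, as an extended real) of a sequence
`a = (a_{j,λ})_{j ∈ ℕ₀, λ ∈ Λ_j}` of nonnegative extended reals. -/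
noncomputable def bNormE {ι : Type*} (Λ : ℕ → Finset ι) (α p q : ℝ) (a : ℕ → ι → ℝ≥0∞) : ℝ≥0∞ :=
  (∑' j : ℕ, (2 : ℝ≥0∞) ^ ((j : ℝ) * (α + 2 * (1 / 2 - 1 / p)) * q) *
    (∑ l ∈ Λ j, (a j l) ^ p) ^ (q / p)) ^ (1 / q)

/-!
For a sequence equal to `2^{-jν}` on the whole level `Λ_j`, the `j`-th summand of the
`b^β_{p,q}`-quasi-norm is `#Λ_j^{q/p} · 2^{jq(β + 1 - 2/p - ν)}`, which is comparable to
`2^{jq(β + 1 - ν)}` because `#Λ_j ~ 2^{2j}`. The series therefore converges (geometrically)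
when `ν > β + 1` and diverges (its terms stay bounded below) when `ν ≤ β + 1`. The choice
`ν = 1 + α + γ/2` lies strictly between `(α + γ) + 1` and `α + 1` exactly when `γ < 0`.
-/

lemma ENNReal.ofReal_two_rpow (x : ℝ) : ENNReal.ofReal ((2 : ℝ) ^ x) = (2 : ℝ≥0∞) ^ x := by
  rw [← ENNReal.ofReal_rpow_of_pos two_pos, ENNReal.ofReal_ofNat]

lemma natCast_le_ofReal_mul_two_pow {n m : ℕ} {C : ℝ} (h : (n : ℝ) ≤ C * 2 ^ m) :
    (n : ℝ≥0∞) ≤ ENNReal.ofReal C * 2 ^ m := by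
  simpa [ENNReal.ofReal_mul' (by positivity : (0 : ℝ) ≤ 2 ^ m)] using ENNReal.ofReal_le_ofReal h

lemma ofReal_mul_two_pow_le_natCast {n m : ℕ} {c : ℝ} (h : c * 2 ^ m ≤ (n : ℝ)) :
    ENNReal.ofReal c * 2 ^ m ≤ n := by
  simpa [ENNReal.ofReal_mul' (by positivity : (0 : ℝ) ≤ 2 ^ m)] using ENNReal.ofReal_le_ofReal h

lemma mul_two_pow_rpow_mul_two_rpow (K : ℝ≥0∞) {s : ℝ} (hs : 0 ≤ s) (E : ℝ) (j : ℕ) :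
    (K * 2 ^ (2 * j)) ^ s * (2 : ℝ≥0∞) ^ ((j : ℝ) * E) =
      K ^ s * (2 : ℝ≥0∞) ^ ((j : ℝ) * (2 * s + E)) := by
  rw [ENNReal.mul_rpow_of_nonneg _ _ hs, ← ENNReal.rpow_natCast, ← ENNReal.rpow_mul, mul_assoc,
    ← ENNReal.rpow_add _ _ two_ne_zero ENNReal.ofNat_ne_top]
  push_cast
  ring_nf

section LevelConstant

variable {ι : Type*} (Λ : ℕ → Finset ι)

noncomputable def levelConst (ν : ℝ) : ℕ → ι → ℝ≥0∞ :=
  fun j _ => ENNReal.ofReal ((2 : ℝ) ^ (-(j : ℝ) * ν))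

variable {β p q : ℝ}

lemma bNormE_summand_levelConst (hp : 0 < p) (ν : ℝ) (j : ℕ) :
    (2 : ℝ≥0∞) ^ ((j : ℝ) * (β + 2 * (1 / 2 - 1 / p)) * q) *
        (∑ l ∈ Λ j, levelConst ν j l ^ p) ^ (q / p) =
      ((Λ j).card : ℝ≥0∞) ^ (q / p) * (2 : ℝ≥0∞) ^ ((j : ℝ) * (q * (β + 1 - 2 / p - ν))) := by
  simp only [levelConst, ENNReal.ofReal_two_rpow, Finset.sum_const, nsmul_eq_mul]
  rw [← ENNReal.rpow_mul, ENNReal.mul_rpow_of_ne_top (ENNReal.natCast_ne_top _)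
    (ENNReal.rpow_ne_top_of_nonneg' two_pos ENNReal.ofNat_ne_top), ← ENNReal.rpow_mul,
    mul_left_comm, ← ENNReal.rpow_add _ _ two_ne_zero ENNReal.ofNat_ne_top]
  congr 2
  field_simp
  ring

lemma bNormE_levelConst_lt_top {K : ℝ≥0∞} (hK : K ≠ ⊤)
    (hcard : ∀ j, ((Λ j).card : ℝ≥0∞) ≤ K * 2 ^ (2 * j)) (hp : 0 < p) (hq : 0 < q) {ν : ℝ}
    (hν : β + 1 < ν) : bNormE Λ β p q (levelConst ν) < ⊤ := by
  set r : ℝ≥0∞ := 2 ^ (q * (β + 1 - ν))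
  have hr : r < 1 := ENNReal.rpow_lt_one_of_one_lt_of_neg (by norm_num) (by nlinarith)
  have hsummand : ∀ j : ℕ, (2 : ℝ≥0∞) ^ ((j : ℝ) * (β + 2 * (1 / 2 - 1 / p)) * q) *
      (∑ l ∈ Λ j, levelConst ν j l ^ p) ^ (q / p) ≤ K ^ (q / p) * r ^ j := by
    intro j
    have hs : 0 ≤ q / p := by positivity
    calc _ = ((Λ j).card : ℝ≥0∞) ^ (q / p) * 2 ^ ((j : ℝ) * (q * (β + 1 - 2 / p - ν))) :=
          bNormE_summand_levelConst Λ hp ν j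
      _ ≤ (K * 2 ^ (2 * j)) ^ (q / p) * 2 ^ ((j : ℝ) * (q * (β + 1 - 2 / p - ν))) := by
          gcongr
          exact hcard j
      _ = K ^ (q / p) * r ^ j := by
          rw [mul_two_pow_rpow_mul_two_rpow K hs, ← ENNReal.rpow_natCast, ← ENNReal.rpow_mul]
          congr 2
          field_simp
          ring
  have hsum : ∑' j : ℕ, K ^ (q / p) * r ^ j < ⊤ := by
    rw [ENNReal.tsum_mul_left, ENNReal.tsum_geometric]
    exact ENNReal.mul_lt_top (ENNReal.rpow_lt_top_of_nonneg (by positivity) hK)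
      (ENNReal.inv_lt_top.mpr (tsub_pos_of_lt hr))
  exact ENNReal.rpow_lt_top_of_nonneg (by positivity)
    ((ENNReal.tsum_le_tsum hsummand).trans_lt hsum).ne

lemma bNormE_levelConst_eq_top {κ : ℝ≥0∞} (hκ : κ ≠ 0)
    (hcard : ∀ j, κ * 2 ^ (2 * j) ≤ ((Λ j).card : ℝ≥0∞)) (hp : 0 < p) (hq : 0 < q) {ν : ℝ}
    (hν : ν ≤ β + 1) : bNormE Λ β p q (levelConst ν) = ⊤ := by
  have hsummand : ∀ j : ℕ, κ ^ (q / p) ≤ (2 : ℝ≥0∞) ^ ((j : ℝ) * (β + 2 * (1 / 2 - 1 / p)) * q) *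
      (∑ l ∈ Λ j, levelConst ν j l ^ p) ^ (q / p) := by
    intro j
    have hs : 0 ≤ q / p := by positivity
    calc κ ^ (q / p) ≤ κ ^ (q / p) * 2 ^ ((j : ℝ) * (q * (β + 1 - ν))) := by
          refine le_mul_of_one_le_right' ?_
          simpa using ENNReal.rpow_le_rpow_of_exponent_le one_le_two
            (mul_nonneg j.cast_nonneg (mul_nonneg hq.le (sub_nonneg.mpr hν)))
      _ = (κ * 2 ^ (2 * j)) ^ (q / p) * 2 ^ ((j : ℝ) * (q * (β + 1 - 2 / p - ν))) := by
          rw [mul_two_pow_rpow_mul_two_rpow κ hs]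
          congr 3
          field_simp
          ring
      _ ≤ ((Λ j).card : ℝ≥0∞) ^ (q / p) * 2 ^ ((j : ℝ) * (q * (β + 1 - 2 / p - ν))) := by
          gcongr
          exact hcard j
      _ = _ := (bNormE_summand_levelConst Λ hp ν j).symm
  have hsum := ENNReal.tsum_le_tsum hsummand
  rw [ENNReal.tsum_const_eq_top_of_ne_zero (by positivity), top_le_iff] at hsum
  rw [bNormE, hsum]
  exact ENNReal.top_rpow_of_pos (by positivity)

end LevelConstant

theorem stmt6_general {ι : Type*} (Λ : ℕ → Finset ι) (c C : ℝ) (hc : 0 < c)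
    (hcard : ∀ j : ℕ, c * 2 ^ (2 * j) ≤ ((Λ j).card : ℝ) ∧ ((Λ j).card : ℝ) ≤ C * 2 ^ (2 * j))
    (α γ p₀ q₀ p₁ q₁ : ℝ) (hγ : γ < 0)
    (adm₀ : AdmissibleT (α + γ) p₀ q₀) (adm₁ : AdmissibleT α p₁ q₁) :
    bNormE Λ (α + γ) p₀ q₀
        (fun j _ => ENNReal.ofReal ((2 : ℝ) ^ (-(j : ℝ) * (1 + α + γ / 2)))) < ⊤ ∧
    bNormE Λ α p₁ q₁
        (fun j _ => ENNReal.ofReal ((2 : ℝ) ^ (-(j : ℝ) * (1 + α + γ / 2)))) = ⊤ := by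
  obtain ⟨hp₀, hq₀, -⟩ := adm₀
  obtain ⟨hp₁, hq₁, -⟩ := adm₁
  exact ⟨bNormE_levelConst_lt_top Λ ENNReal.ofReal_ne_top
      (fun j => natCast_le_ofReal_mul_two_pow (hcard j).2) hp₀ hq₀ (by linarith),
    bNormE_levelConst_eq_top Λ (ENNReal.ofReal_pos.mpr hc).ne'
      (fun j => ofReal_mul_two_pow_le_natCast (hcard j).1) hp₁ hq₁ (by linarith)⟩

/-- If `γ < 0`, there is no embedding `b^{α+γ}_{p₀,q₀} ↪ b^α_{p₁,q₁}`: the sequence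
`a*` with `a*_{j,λ} = 2^{-j(1+α+γ/2)}` belongs to the first space but not to the second. -/
theorem stmt6 {ι : Type*} (Λ : ℕ → Finset ι) (c C : ℝ) (hc : 0 < c) (hC : 0 < C)
    (hcard : ∀ j : ℕ, c * 2 ^ (2 * j) ≤ ((Λ j).card : ℝ) ∧ ((Λ j).card : ℝ) ≤ C * 2 ^ (2 * j))
    (α γ p₀ q₀ p₁ q₁ : ℝ) (hγ : γ < 0)
    (adm₀ : AdmissibleT (α + γ) p₀ q₀) (adm₁ : AdmissibleT α p₁ q₁) :
    bNormE Λ (α + γ) p₀ q₀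
        (fun j _ => ENNReal.ofReal ((2 : ℝ) ^ (-(j : ℝ) * (1 + α + γ / 2)))) < ⊤ ∧
    bNormE Λ α p₁ q₁
        (fun j _ => ENNReal.ofReal ((2 : ℝ) ^ (-(j : ℝ) * (1 + α + γ / 2)))) = ⊤ :=
  stmt6_general Λ c C hc hcard α γ p₀ q₀ p₁ q₁ hγ adm₀ adm₁
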